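/- Fix m ≥ 1 and let A = {nᵐ : n ≥ 1} be the set of m-th powers of positive integers. For any partition of A into two subsets, at least one subset contains three distinct elements x, y, z in geometric progression (y² = x·z). -/
import Mathlib

lemma vdw9 : ∀ f : Fin 9 → Bool, ∃ a b c : Fin 9,
    (a : ℕ) < b ∧ (b : ℕ) < c ∧ (a : ℕ) + c = 2 * b ∧ f a = f b ∧ f b = f c := by
  set_option maxRecDepth 4000 in decide

theorem stmt_9 (m : ℕ) (hm : 1 ≤ m) (M₁ M₂ : Set ℕ)
    (hpart : M₁ ∪ M₂ = {x : ℕ | ∃ n : ℕ, 1 ≤ n ∧ x = n ^ m}) :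
    (∃ x y z : ℕ, x ∈ M₁ ∧ y ∈ M₁ ∧ z ∈ M₁ ∧ y ^ 2 = x * z ∧ x ≠ y ∧ y ≠ z ∧ x ≠ z) ∨
    (∃ x y z : ℕ, x ∈ M₂ ∧ y ∈ M₂ ∧ z ∈ M₂ ∧ y ^ 2 = x * z ∧ x ≠ y ∧ y ≠ z ∧ x ≠ z) := by
  classical
  -- every 2^(k*m) is in the union
  have hmem : ∀ k : ℕ, 2 ^ (k * m) ∈ M₁ ∪ M₂ := by
    intro k
    rw [hpart]
    exact ⟨2 ^ k, Nat.one_le_two_pow, by rw [← pow_mul]⟩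
  set f : Fin 9 → Bool := fun k => decide (2 ^ ((k : ℕ) * m) ∈ M₁) with hf
  obtain ⟨a, b, c, hab, hbc, hsum, fab, fbc⟩ := vdw9 f
  set x := 2 ^ ((a : ℕ) * m)
  set y := 2 ^ ((b : ℕ) * m)
  set z := 2 ^ ((c : ℕ) * m)
  have hgeo : y ^ 2 = x * z := by
    have he : (b : ℕ) * m * 2 = (a : ℕ) * m + (c : ℕ) * m := by
      rw [← add_mul, hsum]; ring
    simp only [x, y, z, ← pow_mul, ← pow_add, he]
  have hxy : x ≠ y := by
    have : (a : ℕ) * m < (b : ℕ) * m := (Nat.mul_lt_mul_right hm).mpr hab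
    exact ne_of_lt (Nat.pow_lt_pow_right one_lt_two this)
  have hyz : y ≠ z := by
    have : (b : ℕ) * m < (c : ℕ) * m := (Nat.mul_lt_mul_right hm).mpr hbc
    exact ne_of_lt (Nat.pow_lt_pow_right one_lt_two this)
  have hxz : x ≠ z := by
    have : (a : ℕ) * m < (c : ℕ) * m := (Nat.mul_lt_mul_right hm).mpr (hab.trans hbc)
    exact ne_of_lt (Nat.pow_lt_pow_right one_lt_two this)
  by_cases h : f a = true
  · left
    have ha : x ∈ M₁ := of_decide_eq_true h
    have hb : y ∈ M₁ := of_decide_eq_true (fab.symm.trans h)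
    have hc : z ∈ M₁ := of_decide_eq_true ((fab.trans fbc).symm.trans h)
    exact ⟨x, y, z, ha, hb, hc, hgeo, hxy, hyz, hxz⟩
  · right
    have ha : x ∈ M₂ := by
      have := hmem a
      have hx : x ∉ M₁ := fun hx => h (decide_eq_true hx)
      exact this.resolve_left hx
    have hb : y ∈ M₂ := by
      have := hmem b
      have hx : y ∉ M₁ := fun hx => h (fab.trans (decide_eq_true hx))
      exact this.resolve_left hx
    have hc : z ∈ M₂ := by
      have := hmem c
      have hx : z ∉ M₁ := fun hx => h ((fab.trans fbc).trans (decide_eq_true hx))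
      exact this.resolve_left hx
    exact ⟨x, y, z, ha, hb, hc, hgeo, hxy, hyz, hxz⟩
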